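/- arXiv:math/0410280 — 3 statements merged into one kernel-verified Lean document; each statement's English description precedes it below -/
import Mathlib

section
/- Let $p \in \{0, 1/(k+1), \dots, 1\}$ for some integer $k \ge 1$, and let $B_p$ be the Bernoulli distribution with parameter $p$. Then for any $\alpha \ge 0$, $\log E_{B_p}[\exp(-\alpha\chi)] \le -\alpha p + \frac{k\,\alpha^2}{2(k+1)} p$. -/
/-!
Write `ψ(a) = log (1 - p + p e^{-a}) + a p`. Then `ψ(0) = ψ'(0) = 0` and `ψ'' = q (1 - q)`, where
`q = p e^{-a} / (1 - p + p e^{-a})` is the mean of the Bernoulli law exponentially tilted by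
`e^{-a χ}`. For `a ≥ 0` tilting only lowers the mean, so `0 ≤ q ≤ p`, and on the grid `p = 0` or
`p ≥ 1/(k+1)`; in the latter case `q (1 - q) ≤ (1 - 1/(k+1)) p`, and integrating twice gives the bound.
-/

open Real Set

theorem le_mul_sq_of_hasDerivAt_of_hasDerivAt {f f' f'' : ℝ → ℝ} {M x : ℝ}
    (hf : ∀ y, HasDerivAt f (f' y) y) (hf' : ∀ y, HasDerivAt f' (f'' y) y)
    (h₀ : f 0 = 0) (h₀' : f' 0 = 0) (hM : ∀ y, 0 ≤ y → f'' y ≤ M) (hx : 0 ≤ x) :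
    f x ≤ M / 2 * x ^ 2 := by
  have hf'_le : ∀ y ∈ Icc 0 x, f' y ≤ M * y :=
    image_le_of_deriv_right_le_deriv_boundary
      (fun y _ => (hf' y).continuousAt.continuousWithinAt)
      (fun y _ => (hf' y).hasDerivWithinAt) (by simp [h₀'])
      (by fun_prop) (fun y _ => ((hasDerivAt_id y).const_mul M).hasDerivWithinAt.congr_deriv
        (mul_one M)) (fun y hy => hM y hy.1)
  have hB : ∀ y, HasDerivAt (fun y => M / 2 * y ^ 2) (M * y) y := fun y =>
    ((hasDerivAt_pow 2 y).const_mul (M / 2)).congr_deriv (by ring)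
  exact image_le_of_deriv_right_le_deriv_boundary
    (fun y _ => (hf y).continuousAt.continuousWithinAt)
    (fun y _ => (hf y).hasDerivWithinAt) (by simp [h₀])
    (fun y _ => (hB y).continuousAt.continuousWithinAt) (fun y _ => (hB y).hasDerivWithinAt)
    (fun y hy => hf'_le y (Ico_subset_Icc_self hy)) ⟨hx, le_rfl⟩

theorem mul_one_sub_le_one_sub_mul {q p ε : ℝ} (hq : 0 ≤ q) (hqp : q ≤ p)
    (hε : ε ≤ 1 / 2) (hεp : ε ≤ p) : q * (1 - q) ≤ (1 - ε) * p := by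
  -- `t ↦ t (1 - t)` increases on `[0, 1/2]`; past `1/2` it is at most `1/4 ≤ p/2`.
  rcases le_total p (1 / 2) with hp | hp
  · nlinarith [mul_nonneg (sub_nonneg.2 hqp) (by linarith : (0 : ℝ) ≤ 1 - p - q)]
  · nlinarith [sq_nonneg (q - 1 / 2)]

section Bernoulli

variable {p : ℝ}

theorem one_sub_add_mul_exp_neg_pos (hp₀ : 0 ≤ p) (hp₁ : p ≤ 1) (a : ℝ) :
    0 < 1 - p + p * exp (-a) := by
  rcases hp₁.lt_or_eq with hp₁ | rfl
  · nlinarith [mul_nonneg hp₀ (exp_pos (-a)).le]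
  · simpa using exp_pos (-a)

noncomputable def bernoulliTiltedMean (p a : ℝ) : ℝ :=
  p * exp (-a) / (1 - p + p * exp (-a))

theorem bernoulliTiltedMean_nonneg (hp₀ : 0 ≤ p) (hp₁ : p ≤ 1) (a : ℝ) :
    0 ≤ bernoulliTiltedMean p a :=
  div_nonneg (by positivity) (one_sub_add_mul_exp_neg_pos hp₀ hp₁ a).le

theorem bernoulliTiltedMean_le (hp₀ : 0 ≤ p) (hp₁ : p ≤ 1) {a : ℝ} (ha : 0 ≤ a) :
    bernoulliTiltedMean p a ≤ p := by
  rw [bernoulliTiltedMean, div_le_iff₀ (one_sub_add_mul_exp_neg_pos hp₀ hp₁ a)]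
  nlinarith [exp_le_one_iff.2 (neg_nonpos.2 ha), mul_nonneg hp₀ (sub_nonneg.2 hp₁)]

theorem hasDerivAt_one_sub_add_mul_exp_neg (a : ℝ) :
    HasDerivAt (fun a => 1 - p + p * exp (-a)) (-(p * exp (-a))) a := by
  have := (((hasDerivAt_neg a).exp).const_mul p).const_add (1 - p)
  exact this.congr_deriv (by ring)

theorem hasDerivAt_log_one_sub_add_mul_exp_neg (hp₀ : 0 ≤ p) (hp₁ : p ≤ 1) (a : ℝ) :
    HasDerivAt (fun a => log (1 - p + p * exp (-a))) (-bernoulliTiltedMean p a) a := by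
  have := (hasDerivAt_one_sub_add_mul_exp_neg a).log
    (one_sub_add_mul_exp_neg_pos hp₀ hp₁ a).ne'
  exact this.congr_deriv (by rw [bernoulliTiltedMean, neg_div])

theorem hasDerivAt_bernoulliTiltedMean (hp₀ : 0 ≤ p) (hp₁ : p ≤ 1) (a : ℝ) :
    HasDerivAt (bernoulliTiltedMean p)
      (-(bernoulliTiltedMean p a * (1 - bernoulliTiltedMean p a))) a := by
  have hD := (one_sub_add_mul_exp_neg_pos hp₀ hp₁ a).ne'
  have := ((hasDerivAt_neg a).exp.const_mul p).div
    (hasDerivAt_one_sub_add_mul_exp_neg a) hD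
  refine this.congr_deriv ?_
  simp only [bernoulliTiltedMean]
  field_simp
  ring

theorem log_one_sub_add_mul_exp_neg_le {ε a : ℝ} (hε : ε ≤ 1 / 2) (hεp : ε ≤ p)
    (hp₀ : 0 ≤ p) (hp₁ : p ≤ 1) (ha : 0 ≤ a) :
    log (1 - p + p * exp (-a)) ≤ -a * p + (1 - ε) * p / 2 * a ^ 2 := by
  have hψ : ∀ y, HasDerivAt (fun y => log (1 - p + p * exp (-y)) + y * p)
      (p - bernoulliTiltedMean p y) y := fun y =>
    ((hasDerivAt_log_one_sub_add_mul_exp_neg hp₀ hp₁ y).add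
      ((hasDerivAt_id y).mul_const p)).congr_deriv (by ring)
  have hψ' : ∀ y, HasDerivAt (fun y => p - bernoulliTiltedMean p y)
      (bernoulliTiltedMean p y * (1 - bernoulliTiltedMean p y)) y := fun y =>
    ((hasDerivAt_bernoulliTiltedMean hp₀ hp₁ y).const_sub p).congr_deriv (neg_neg _)
  have := le_mul_sq_of_hasDerivAt_of_hasDerivAt hψ hψ' (by simp)
    (by simp [bernoulliTiltedMean])
    (fun y hy => mul_one_sub_le_one_sub_mul (bernoulliTiltedMean_nonneg hp₀ hp₁ y)
      (bernoulliTiltedMean_le hp₀ hp₁ hy) hε hεp) ha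
  linarith

end Bernoulli

/-- For `p = m/(k+1)` in the grid and any `α ≥ 0`,
`log E_{B_p}[exp(-α χ)] ≤ -α p + k α²/(2(k+1)) p`, where
`E_{B_p}[exp(-α χ)] = (1-p) + p e^{-α}`. -/
theorem stmt_3 (k : ℕ) (hk : 1 ≤ k) (m : ℕ) (hm : m ≤ k + 1)
    (p : ℝ) (hp : p = (m : ℝ) / (k + 1)) (α : ℝ) (hα : 0 ≤ α) :
    Real.log ((1 - p) + p * Real.exp (-α))
      ≤ -α * p + (k : ℝ) * α ^ 2 / (2 * (k + 1)) * p := by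
  rcases Nat.eq_zero_or_pos m with rfl | hm₀
  · simp [hp]
  have hk₁ : (0 : ℝ) < k + 1 := by positivity
  have hε : 1 / ((k : ℝ) + 1) ≤ 1 / 2 :=
    one_div_le_one_div_of_le two_pos (by norm_cast; omega)
  have hεp : 1 / ((k : ℝ) + 1) ≤ p := by
    rw [hp]
    gcongr
    exact_mod_cast hm₀
  have hp₁ : p ≤ 1 := by
    rw [hp, div_le_one hk₁]
    exact_mod_cast hm
  have := log_one_sub_add_mul_exp_neg_le hε hεp (hp ▸ by positivity) hp₁ hα
  convert this using 2
  field_simp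
  ring
end

section
/- The function $g : \mathbb{R} \to \mathbb{R}$ defined by $g(x) = x^{-2}(e^x - 1 - x)$ for $x \ne 0$ and $g(0) = 1/2$ is increasing on $\mathbb{R}$. -/
/-!
Taylor's formula with integral remainder gives
`(e^x - 1 - x) / x² = ∫₀¹ (1 - t) e^{t x} dt` for `x ≠ 0`, and the right-hand side equals `1/2`
at `x = 0`. For each `t ∈ [0, 1]` the integrand is increasing in `x`, hence so is the integral.
-/

open Real intervalIntegral

lemma hasDerivAt_antideriv_one_sub_mul_exp_mul {x : ℝ} (hx : x ≠ 0) (t : ℝ) :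
    HasDerivAt (fun t => (1 - t) * exp (t * x) / x + exp (t * x) / x ^ 2)
      ((1 - t) * exp (t * x)) t := by
  have hexp : HasDerivAt (fun t => exp (t * x)) (exp (t * x) * x) t := by
    simpa using ((hasDerivAt_id t).mul_const x).exp
  have hlin : HasDerivAt (fun t : ℝ => 1 - t) (-1) t := by
    simpa using (hasDerivAt_id t).const_sub 1
  refine (((hlin.mul hexp).div_const x).add (hexp.div_const (x ^ 2))).congr_deriv ?_
  field_simp
  ring

lemma intervalIntegrable_one_sub_mul_exp_mul (x a b : ℝ) :
    IntervalIntegrable (fun t : ℝ => (1 - t) * exp (t * x)) MeasureTheory.volume a b :=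
  (by fun_prop : Continuous fun t : ℝ => (1 - t) * exp (t * x)).intervalIntegrable a b

lemma integral_one_sub_mul_exp_mul {x : ℝ} (hx : x ≠ 0) :
    ∫ t in (0 : ℝ)..1, (1 - t) * exp (t * x) = (exp x - 1 - x) / x ^ 2 := by
  rw [integral_eq_sub_of_hasDerivAt (fun t _ => hasDerivAt_antideriv_one_sub_mul_exp_mul hx t)
    (intervalIntegrable_one_sub_mul_exp_mul x 0 1)]
  field_simp
  rw [mul_zero, exp_zero]
  ring

lemma integral_one_sub : ∫ t in (0 : ℝ)..1, (1 - t) = 1 / 2 := by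
  rw [integral_sub intervalIntegrable_const intervalIntegrable_id]
  norm_num

lemma exp_sub_one_sub_div_sq_eq_integral (x : ℝ) :
    (if x = 0 then 1 / 2 else (exp x - 1 - x) / x ^ 2)
      = ∫ t in (0 : ℝ)..1, (1 - t) * exp (t * x) := by
  split_ifs with hx
  · simp [hx, integral_one_sub]
  · exact (integral_one_sub_mul_exp_mul hx).symm

/-- The function `g(x) = (e^x - 1 - x)/x²` (with `g(0) = 1/2`) is increasing. -/
theorem stmt_8 :
    Monotone (fun x : ℝ =>
      if x = 0 then 1/2 else (Real.exp x - 1 - x) / x ^ 2) := by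
  intro a b hab
  simp only [exp_sub_one_sub_div_sq_eq_integral]
  refine integral_mono_on zero_le_one (intervalIntegrable_one_sub_mul_exp_mul a 0 1)
    (intervalIntegrable_one_sub_mul_exp_mul b 0 1) fun t ⟨ht0, ht1⟩ => ?_
  exact mul_le_mul_of_nonneg_left (exp_le_exp.mpr (mul_le_mul_of_nonneg_left hab ht0))
    (sub_nonneg.mpr ht1)
end

section
/- Let $d' > 0$, $N > 0$, and $r_1, R \in [0, 1/2]$ satisfy $(R - r_1)^2 \le \frac{2 d' R (1 - R)}{N}$. Then $R \le \left(1 + \frac{2d'}{N}\right)^{-1} \left\{ r_1 + \frac{d'}{N} + \sqrt{ \frac{2 d' r_1 (1 - r_1)}{N} + \frac{d'^2}{N^2} } \right\}$. -/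
/-!
Expanding, the hypothesis says that `R` lies below the larger root of the quadratic
`(1 + 2t) R² - 2 (r₁ + t) R + r₁²` with `t = d'/N`. Multiplying by `1 + 2t` completes the
square: `((1 + 2t) R - (r₁ + t))² ≤ 2t r₁(1 - r₁) + t²`, and taking square roots gives the bound.
-/

namespace QuadraticBound

variable {t r R : ℝ}

theorem completed_sq_le_of_sq_sub_le (ht : 0 ≤ t) (h : (R - r) ^ 2 ≤ 2 * t * (R * (1 - R))) :
    ((1 + 2 * t) * R - (r + t)) ^ 2 ≤ 2 * t * (r * (1 - r)) + t ^ 2 := by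
  have identity : ((1 + 2 * t) * R - (r + t)) ^ 2 - (2 * t * (r * (1 - r)) + t ^ 2)
      = (1 + 2 * t) * ((R - r) ^ 2 - 2 * t * (R * (1 - R))) := by ring
  have := mul_nonpos_of_nonneg_of_nonpos (by linarith : (0 : ℝ) ≤ 1 + 2 * t) (sub_nonpos.mpr h)
  linarith

theorem le_of_sq_sub_le (ht : 0 ≤ t) (h : (R - r) ^ 2 ≤ 2 * t * (R * (1 - R))) :
    R ≤ (1 + 2 * t)⁻¹ * (r + t + √(2 * t * (r * (1 - r)) + t ^ 2)) := by
  have hroot := Real.abs_le_sqrt (completed_sq_le_of_sq_sub_le ht h)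
  rw [le_inv_mul_iff₀ (by linarith)]
  linarith [le_abs_self ((1 + 2 * t) * R - (r + t))]

end QuadraticBound

theorem stmt_14_general (d' N r₁ R : ℝ) (hd : 0 < d') (hN : 0 < N)
    (h : (R - r₁) ^ 2 ≤ 2 * d' * (R * (1 - R)) / N) :
    R ≤ (1 + 2 * d' / N)⁻¹ *
      (r₁ + d' / N + Real.sqrt (2 * d' * (r₁ * (1 - r₁)) / N + d' ^ 2 / N ^ 2)) := by
  have ht : 0 ≤ d' / N := by positivity
  have h' : (R - r₁) ^ 2 ≤ 2 * (d' / N) * (R * (1 - R)) := by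
    rwa [mul_div_right_comm, mul_div_assoc] at h
  convert QuadraticBound.le_of_sq_sub_le ht h' using 4 <;> ring

/-- Solving `(R - r₁)² ≤ 2d' R(1-R)/N` in `R` for `r₁, R ∈ [0, 1/2]`. -/
theorem stmt_14 (d' N r₁ R : ℝ) (hd : 0 < d') (hN : 0 < N)
    (hr₁0 : 0 ≤ r₁) (hr₁1 : r₁ ≤ 1/2) (hR0 : 0 ≤ R) (hR1 : R ≤ 1/2)
    (h : (R - r₁) ^ 2 ≤ 2 * d' * (R * (1 - R)) / N) :
    R ≤ (1 + 2 * d' / N)⁻¹ *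
      (r₁ + d' / N + Real.sqrt (2 * d' * (r₁ * (1 - r₁)) / N + d' ^ 2 / N ^ 2)) :=
  stmt_14_general d' N r₁ R hd hN h
end
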